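/- Among the 96 automorphisms of the Möbius–Kantor graph MK, exactly 14 have Lefschetz number 4, exactly 24 have Lefschetz number 2, and exactly 57 have Lefschetz number 0 (the remaining one being the identity with Lefschetz number −8). -/

import Mathlib

/-- The underlying relation of the Möbius–Kantor graph `GP(8,3)`. -/
def mkRel (v w : ZMod 8 × Fin 2) : Bool :=
  (v.2 == 0 && w.2 == 0 && (w.1 == v.1 + 1 || v.1 == w.1 + 1)) ||
  ((v.2 == 0 && w.2 == 1 || v.2 == 1 && w.2 == 0) && v.1 == w.1) ||
  (v.2 == 1 && w.2 == 1 && (w.1 == v.1 + 3 || v.1 == w.1 + 3))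

/-- The Möbius–Kantor graph, i.e. the generalized Petersen graph `GP(8,3)`. -/
def MK : SimpleGraph (ZMod 8 × Fin 2) where
  Adj v w := mkRel v w = true
  symm := ⟨by intro v w; revert v w; decide⟩
  loopless := ⟨by intro v; revert v; decide⟩

instance : DecidableRel MK.Adj := fun v w => inferInstanceAs (Decidable (mkRel v w = true))

noncomputable instance : Fintype (MK ≃g MK) :=
  Fintype.ofInjective (fun T => T.toEquiv) (fun T S h => by
    cases T; cases S; simpa using h)

/-- The Lefschetz number of a graph automorphism `T` of `MK`: the number of fixed
vertices, minus the number of edges fixed pointwise, plus the number of edges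
mapped to themselves with their endpoints swapped. -/
noncomputable def lefschetz (T : MK ≃g MK) : ℤ :=
  ((Finset.univ.filter fun v : ZMod 8 × Fin 2 => T v = v).card : ℤ)
    - ((MK.edgeFinset.filter fun e => ∀ v ∈ e, T v = v).card : ℤ)
    + ((MK.edgeFinset.filter fun e => Sym2.map T e = e ∧ ¬ ∀ v ∈ e, T v = v).card : ℤ)


/-!
The automorphism group of `MK` acts regularly on its 96 two-arcs `(a, b, c)` (`b ≠ c` neighbours
of `a`). Walk counts are invariant under automorphisms, and the numbers of walks from the two-arc
`(1,0) – (0,0) – (0,1)` pin down every vertex (two of them only after the others are fixed), so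
an automorphism is determined by the image of that two-arc; there are thus at most 96 of them.
Conversely, words in a rotation, a reflection, the map exchanging the two rims and one further
involution give 96 automorphisms that are distinct on this two-arc. Having the whole group as an
explicit list, the Lefschetz numbers are evaluated one by one.
-/

namespace SimpleGraph

variable {V W α : Type*} [Fintype V] [Fintype W] [DecidableEq V] [DecidableEq W]

theorem Iso.adjMatrix_pow_apply_apply [Semiring α] {G : SimpleGraph V} {H : SimpleGraph W}
    [DecidableRel G.Adj] [DecidableRel H.Adj] (f : G ≃g H) (k : ℕ) (v w : V) :
    (H.adjMatrix α ^ k) (f v) (f w) = (G.adjMatrix α ^ k) v w := by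
  rw [← f.reindex_adjMatrix α, ← Matrix.coe_reindexAlgEquiv ℕ, ← map_pow,
    Matrix.coe_reindexAlgEquiv, Matrix.reindex_apply, Matrix.submatrix_apply]
  simp

variable (G : SimpleGraph V) [DecidableRel G.Adj]

def IsWalkSeparated (F : Finset V) (n : ℕ) (w : V) : Prop :=
  ∀ w', (∀ x ∈ F, ∀ k ≤ n, (G.adjMatrix ℕ ^ k) x w' = (G.adjMatrix ℕ ^ k) x w) → w' = w

instance (F : Finset V) (n : ℕ) (w : V) : Decidable (G.IsWalkSeparated F n w) := by
  unfold IsWalkSeparated; infer_instance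

variable {G}

theorem Iso.apply_eq_of_isWalkSeparated {F : Finset V} {n : ℕ} {w : V} (S : G ≃g G)
    (hF : ∀ x ∈ F, S x = x) (hw : G.IsWalkSeparated F n w) : S w = w :=
  hw (S w) fun x hx k _ => by simpa only [hF x hx] using S.adjMatrix_pow_apply_apply k x w

end SimpleGraph

namespace MK

abbrev Vertex := ZMod 8 × Fin 2

theorem eq_one_of_fixes_arc (S : MK ≃g MK) (h₀ : S (0, 0) = (0, 0)) (h₁ : S (1, 0) = (1, 0))
    (h₂ : S (0, 1) = (0, 1)) : S = 1 := by
  have anchors : ∀ x ∈ ({(0, 0), (1, 0), (0, 1)} : Finset Vertex), S x = x := by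
    simp only [Finset.mem_insert, Finset.mem_singleton]
    rintro x (rfl | rfl | rfl) <;> assumption
  -- `(2,1)` and `(6,1)` have the same walk counts from the anchors; only `(2,1)` is adjacent to `(2,0)`.
  have generic : ∀ w ∈ (Finset.univ \ {(2, 1), (6, 1)} : Finset Vertex), S w = w := by
    intro w hw
    refine S.apply_eq_of_isWalkSeparated anchors (n := 3) ?_
    revert w; decide
  refine RelIso.ext fun w => ?_
  exact S.apply_eq_of_isWalkSeparated generic (n := 1) (w := w) (by revert w; decide)

def arc (T : MK ≃g MK) : Vertex × Vertex × Vertex := (T (0, 0), T (1, 0), T (0, 1))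

theorem arc_injective : Function.Injective arc := by
  intro S T h
  simp only [arc, Prod.mk.injEq] at h
  obtain ⟨h₀, h₁, h₂⟩ := h
  have : T⁻¹ * S = 1 := eq_one_of_fixes_arc _
    (by simp [RelIso.mul_apply, h₀]) (by simp [RelIso.mul_apply, h₁]) (by simp [RelIso.mul_apply, h₂])
  exact (inv_mul_eq_one.mp this).symm

def twoArcs : Finset (Vertex × Vertex × Vertex) :=
  Finset.univ.filter fun a => MK.Adj a.1 a.2.1 ∧ MK.Adj a.1 a.2.2 ∧ a.2.1 ≠ a.2.2

theorem arc_mem_twoArcs (T : MK ≃g MK) : arc T ∈ twoArcs := by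
  simp only [twoArcs, arc, Finset.mem_filter, Finset.mem_univ, true_and, T.map_adj_iff, ne_eq,
    EmbeddingLike.apply_eq_iff_eq]
  decide

set_option maxRecDepth 10000 in
theorem card_twoArcs : twoArcs.card = 96 := by decide

theorem card_aut_le : Fintype.card (MK ≃g MK) ≤ 96 :=
  card_twoArcs ▸
    Finset.card_le_card_of_injOn arc (fun T _ => arc_mem_twoArcs T) arc_injective.injOn

def rotate : MK ≃g MK where
  toEquiv := (Equiv.addRight 1).prodCongr (Equiv.refl _)
  map_rel_iff' := by decide

def reflect : MK ≃g MK where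
  toEquiv := (Equiv.neg _).prodCongr (Equiv.refl _)
  map_rel_iff' := by decide

def swapRims : MK ≃g MK where
  toEquiv := Function.Involutive.toPerm (fun v => (3 * v.1, 1 - v.2))
    (by unfold Function.Involutive; decide)
  map_rel_iff' := by decide

/-- Together with `reflect` it generates the stabiliser `S₃` of `(0,0)`; `reflect * twist` has
order 3. -/
def twist : MK ≃g MK where
  toEquiv := Equiv.swap (1, 0) (0, 1) * Equiv.swap (2, 0) (3, 1) * Equiv.swap (5, 0) (4, 1) *
    Equiv.swap (6, 0) (7, 1) * Equiv.swap (1, 1) (5, 1) * Equiv.swap (2, 1) (6, 1)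
  map_rel_iff' := by decide

def autList : List (MK ≃g MK) := do
  let i ← List.range 8
  let e ← List.range 2
  let m ← List.range 2
  let t ← List.range 3
  return rotate ^ i * swapRims ^ e * reflect ^ m * (reflect * twist) ^ t

set_option maxRecDepth 10000 in
theorem autList_nodup : autList.Nodup := List.Nodup.of_map arc (by decide)

def autFinset : Finset (MK ≃g MK) := ⟨autList, autList_nodup⟩

theorem autFinset_eq_univ : autFinset = Finset.univ :=
  Finset.eq_univ_of_card _ (le_antisymm (Finset.card_le_univ _) (card_aut_le.trans (by decide)))

end MK

set_option maxRecDepth 10000 in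
/-- Among the 96 automorphisms of `MK`, exactly 14 have Lefschetz number 4, exactly 24
have Lefschetz number 2, and exactly 57 have Lefschetz number 0. -/
theorem lefschetz_counts_moebiusKantor :
    Nat.card (MK ≃g MK) = 96 ∧
    (Finset.univ.filter fun T : MK ≃g MK => lefschetz T = 4).card = 14 ∧
    (Finset.univ.filter fun T : MK ≃g MK => lefschetz T = 2).card = 24 ∧
    (Finset.univ.filter fun T : MK ≃g MK => lefschetz T = 0).card = 57 ∧
    (Finset.univ.filter fun T : MK ≃g MK => lefschetz T = -8).card = 1 ∧
    lefschetz (1 : MK ≃g MK) = -8 := by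
  rw [Nat.card_eq_fintype_card, ← Finset.card_univ, ← MK.autFinset_eq_univ]
  decide
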